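/- Let P = DΠ be a generalized permutation matrix, i.e., D diagonal with strictly positive diagonal entries and Π a permutation matrix, so that P is invertible. Then P⁻¹ · ReLU(P x) = ReLU(x) for all vectors x. -/

import Mathlib

/-! ReLU acts coordinatewise and is positively homogeneous, so it commutes with permuting
coordinates and with rescaling them by positive factors. Hence `ReLU ∘ P = P ∘ ReLU`, and
`P⁻¹` cancels. -/

open Matrix

def permMat {n : Type*} [DecidableEq n] (σ : Equiv.Perm n) : Matrix n n ℝ :=
  Matrix.of fun i j => if i = σ j then (1 : ℝ) else 0

def relu {n : Type*} (x : n → ℝ) : n → ℝ := fun i => max 0 (x i)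

lemma relu_comp {m n : Type*} (x : n → ℝ) (f : m → n) : relu (x ∘ f) = relu x ∘ f := rfl

lemma permMat_eq_permMatrix_inv {n : Type*} [DecidableEq n] (σ : Equiv.Perm n) :
    permMat σ = (σ⁻¹).permMatrix ℝ := by
  ext i j
  simp [permMat, PEquiv.toMatrix_apply, Equiv.Perm.inv_def, Option.mem_def, Equiv.symm_apply_eq]

section

variable {n : Type*} [Fintype n] [DecidableEq n]

lemma relu_diagonal_mulVec {d : n → ℝ} (hd : ∀ i, 0 ≤ d i) (x : n → ℝ) :
    relu (diagonal d *ᵥ x) = diagonal d *ᵥ relu x := by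
  ext i
  simp only [relu, mulVec_diagonal, mul_max_of_nonneg _ _ (hd i), mul_zero]

lemma relu_permMat_mulVec (σ : Equiv.Perm n) (x : n → ℝ) :
    relu (permMat σ *ᵥ x) = permMat σ *ᵥ relu x := by
  simp only [permMat_eq_permMatrix_inv, permMatrix_mulVec, relu_comp]

lemma relu_diagonal_mul_permMat_mulVec {d : n → ℝ} (hd : ∀ i, 0 ≤ d i) (σ : Equiv.Perm n)
    (x : n → ℝ) : relu ((diagonal d * permMat σ) *ᵥ x) = (diagonal d * permMat σ) *ᵥ relu x := by
  rw [← mulVec_mulVec, ← mulVec_mulVec, relu_diagonal_mulVec hd, relu_permMat_mulVec]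

lemma isUnit_det_permMat (σ : Equiv.Perm n) : IsUnit (permMat σ).det := by
  rw [permMat_eq_permMatrix_inv, det_permutation]
  exact (Equiv.Perm.sign σ⁻¹).isUnit.map (Int.castRingHom ℝ)

lemma isUnit_det_diagonal_mul_permMat {d : n → ℝ} (hd : ∀ i, d i ≠ 0) (σ : Equiv.Perm n) :
    IsUnit (diagonal d * permMat σ).det := by
  rw [det_mul, det_diagonal]
  exact (Finset.prod_ne_zero_iff.mpr fun i _ => hd i).isUnit.mul (isUnit_det_permMat σ)

end

/-- For a generalized permutation matrix `P = D Π` with strictly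
positive diagonal `D`, `P⁻¹ · ReLU(P x) = ReLU(x)`. -/
theorem inv_relu_genPerm {n : Type*} [Fintype n] [DecidableEq n]
    (d : n → ℝ) (hd : ∀ i, 0 < d i) (σ : Equiv.Perm n) (x : n → ℝ) :
    (Matrix.diagonal d * permMat σ)⁻¹.mulVec
        (relu ((Matrix.diagonal d * permMat σ).mulVec x)) = relu x := by
  have hdet := isUnit_det_diagonal_mul_permMat (fun i => (hd i).ne') σ
  rw [relu_diagonal_mul_permMat_mulVec (fun i => (hd i).le), mulVec_mulVec,
    nonsing_inv_mul _ hdet, one_mulVec]
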